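/- arXiv:2312.11854 — 6 statements merged into one kernel-verified Lean document; each statement's English description precedes it below -/
import Mathlib

section
/- Let n ≥ 1 and l ≥ 1 be integers, and let p_c, p_e, p_s be strictly positive reals with p_c + p_e + p_s = 1 and p_c > p_s/(2^l − 1). Let z : Fin n → Option(𝔽₂^l) be such that any two non-erased entries are distinct (i.e., if z_i = z_j ≠ none then i = j). Then for any two injective maps x¹, x² : Fin n → 𝔽₂^l (encoded matrices with pairwise distinct rows), L(x¹, z) > L(x², z) if and only if |{i : ∃ j, z_j = some(x¹_i)}| > |{i : ∃ j, z_j = some(x²_i)}|; that is, the permutation-averaged channel likelihood of x under z is larger exactly when x shares more rows with the non-erased rows of z. (This is the maximum-likelihood decoder characterization, Proposition 1.) -/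
/-!
Put `q = p_s / (2^l - 1)` and `r = p_c / q > 1`. Then `W(u | v) = c(u) * r^[u = some v]` with
`c(none) = p_e`, `c(some _) = q`, so `L(x, z) = (∏ c(z_i)) * ∑_π r ^ #{i | z_i = some (x (π i))}`.
Since `x` is injective and the non-erased `z_i` are distinct, the pairs `(i, j)` with
`z_i = some (x j)` form a partial matching. Extending it to a permutation `τ` and substituting
`π ↦ τ⁻¹ * π` turns the sum into `∑_π r ^ #(fixed points of π in A)`, where `A` is the set of rows
of `x` observed in `z`. This sum depends only on `#A` (conjugation invariance) and is strictly
increasing in it (compare termwise; the identity permutation gives the strict inequality).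
-/

open Finset Equiv

section FixedPointSum

variable {α : Type*} [Fintype α] [DecidableEq α]

noncomputable def fixedPointSum (r : ℝ) (s : Finset α) : ℝ :=
  ∑ π : Perm α, r ^ #{i ∈ s | π i = i}

/-- Conjugating by `σ` carries the fixed points of `π` in `s` to those of `σ π σ⁻¹` in `σ s`. -/
lemma fixedPointSum_map_perm (r : ℝ) (s : Finset α) (σ : Perm α) :
    fixedPointSum r (s.map σ.toEmbedding) = fixedPointSum r s := by
  refine Fintype.sum_equiv (MulAut.conj σ⁻¹).toEquiv _ _ fun π => ?_
  rw [filter_map, card_map]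
  congr 3
  ext i
  simp [Perm.mul_apply, symm_apply_eq]

lemma fixedPointSum_congr_card (r : ℝ) {s t : Finset α} (h : #s = #t) :
    fixedPointSum r s = fixedPointSum r t := by
  obtain ⟨σ, rfl⟩ := Perm.exists_map_finset_eq s t h
  exact (fixedPointSum_map_perm r s σ).symm

lemma fixedPointSum_lt_of_ssubset {r : ℝ} (hr : 1 < r) {s t : Finset α} (hst : s ⊂ t) :
    fixedPointSum r s < fixedPointSum r t := by
  refine sum_lt_sum (fun π _ => pow_le_pow_right₀ hr.le (card_le_card
    (filter_subset_filter _ hst.subset))) ⟨1, mem_univ _, ?_⟩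
  simpa using pow_lt_pow_right₀ hr (card_lt_card hst)

lemma fixedPointSum_lt_of_card_lt {r : ℝ} (hr : 1 < r) {s t : Finset α} (h : #s < #t) :
    fixedPointSum r s < fixedPointSum r t := by
  obtain ⟨u, hut, hu⟩ := exists_subset_card_eq h.le
  rw [fixedPointSum_congr_card r hu.symm]
  exact fixedPointSum_lt_of_ssubset hr (ssubset_of_subset_of_ne hut (by rintro rfl; omega))

lemma fixedPointSum_lt_iff {r : ℝ} (hr : 1 < r) {s t : Finset α} :
    fixedPointSum r s < fixedPointSum r t ↔ #s < #t := by
  refine ⟨fun h => lt_of_not_ge fun hts => h.not_ge ?_, fixedPointSum_lt_of_card_lt hr⟩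
  rcases hts.eq_or_lt with hts | hts
  · exact (fixedPointSum_congr_card r hts).le
  · exact (fixedPointSum_lt_of_card_lt hr hts).le

end FixedPointSum

section PartialMatching

variable {α : Type*} [Fintype α] {R : α → α → Prop}

lemma exists_perm_of_partialMatching (hfun : ∀ i j j', R i j → R i j' → j = j')
    (hinj : ∀ i i' j, R i j → R i' j → i = i') :
    ∃ τ : Perm α, ∀ i j, R i j → τ i = j := by
  have hmatch (i : {i // ∃ j, R i j}) : R i i.2.choose := i.2.choose_spec
  obtain ⟨τ, hτ⟩ := Perm.exists_extending_pair (fun i : {i // ∃ j, R i j} => (i : α))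
    (fun i => i.2.choose) Subtype.val_injective
    fun i i' h => Subtype.ext (hinj _ _ _ (hmatch i) (by simpa only [← h] using hmatch i'))
  exact ⟨τ, fun i j hij => (hτ ⟨i, j, hij⟩).trans (hfun _ _ _ (hmatch ⟨i, j, hij⟩) hij)⟩

lemma sum_pow_card_matched_eq_fixedPointSum [DecidableEq α] [DecidableRel R] (r : ℝ)
    (hfun : ∀ i j j', R i j → R i j' → j = j') (hinj : ∀ i i' j, R i j → R i' j → i = i') :
    ∑ π : Perm α, r ^ #{i | R i (π i)} = fixedPointSum r {j | ∃ i, R i j} := by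
  obtain ⟨τ, hτ⟩ := exists_perm_of_partialMatching hfun hinj
  have hmatched (π : Perm α) :
      ({i | R i (π i)} : Finset α) = ({i ∈ {i | ∃ j, R i j} | (τ⁻¹ * π) i = i} : Finset α) := by
    refine Finset.ext fun i => ?_
    simp only [mem_filter, mem_univ, true_and, Perm.mul_apply, Perm.inv_eq_iff_eq]
    refine ⟨fun h => ⟨⟨_, h⟩, (hτ _ _ h).symm⟩, fun ⟨⟨j, hij⟩, h⟩ => ?_⟩
    rwa [h, hτ _ _ hij]
  have himage :
      ({i | ∃ j, R i j} : Finset α).map τ.toEmbedding = ({j | ∃ i, R i j} : Finset α) := by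
    ext j
    simp only [mem_map, mem_filter, mem_univ, true_and, Equiv.coe_toEmbedding]
    exact ⟨fun ⟨i, ⟨j', hij'⟩, hj⟩ => ⟨i, hj ▸ hτ _ _ hij' ▸ hij'⟩,
      fun ⟨i, hij⟩ => ⟨i, ⟨j, hij⟩, hτ _ _ hij⟩⟩
  rw [← himage, fixedPointSum_map_perm]
  simp_rw [hmatched]
  exact Fintype.sum_equiv (Equiv.mulLeft τ⁻¹) _ _ fun π => rfl

end PartialMatching

lemma likelihood_eq_mul_fixedPointSum {ι β : Type*} [Fintype ι] [DecidableEq ι] [DecidableEq β]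
    {pe q r : ℝ} {W : Option β → β → ℝ}
    (hW : ∀ u v, W u v = u.elim pe (fun _ => q) * if u = some v then r else 1)
    {z : ι → Option β} (hz : ∀ i j, z i = z j → z i ≠ none → i = j)
    {x : ι → β} (hx : Function.Injective x) :
    ∑ π : Perm ι, ∏ i, W (z i) (x (π i)) =
      (∏ i, (z i).elim pe fun _ => q) * fixedPointSum r {i | ∃ j, z j = some (x i)} := by
  have hfun (i j j' : ι) (hj : z i = some (x j)) (hj' : z i = some (x j')) : j = j' :=
    hx (Option.some_injective _ (hj.symm.trans hj'))
  have hinj (i i' j : ι) (hi : z i = some (x j)) (hi' : z i' = some (x j)) : i = i' :=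
    hz i i' (hi.trans hi'.symm) (by simp [hi])
  rw [← sum_pow_card_matched_eq_fixedPointSum r hfun hinj, mul_sum]
  refine sum_congr rfl fun π _ => ?_
  simp only [hW, prod_mul_distrib, prod_ite, prod_const, one_pow, mul_one]

theorem stmt0_general (n l : ℕ) (hl : 1 ≤ l)
    (pc pe ps : ℝ) (hpe : 0 < pe) (hps : 0 < ps)
    (hgt : pc > ps / (2 ^ l - 1))
    (W : Option (Fin l → ZMod 2) → (Fin l → ZMod 2) → ℝ)
    (hW : ∀ u v, W u v =
      if u = some v then pc else if u = none then pe else ps / (2 ^ l - 1))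
    (z : Fin n → Option (Fin l → ZMod 2))
    (hz : ∀ i j : Fin n, z i = z j → z i ≠ none → i = j)
    (x₁ x₂ : Fin n → (Fin l → ZMod 2))
    (hx₁ : Function.Injective x₁) (hx₂ : Function.Injective x₂) :
    ((∑ π : Equiv.Perm (Fin n), ∏ i : Fin n, W (z i) (x₁ (π i))) >
        ∑ π : Equiv.Perm (Fin n), ∏ i : Fin n, W (z i) (x₂ (π i))) ↔
      (Finset.univ.filter fun i : Fin n => ∃ j : Fin n, z j = some (x₁ i)).card >
        (Finset.univ.filter fun i : Fin n => ∃ j : Fin n, z j = some (x₂ i)).card := by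
  set q : ℝ := ps / (2 ^ l - 1)
  have hq : 0 < q := div_pos hps (sub_pos.2 (one_lt_pow₀ one_lt_two (by omega)))
  have hr : 1 < pc / q := (one_lt_div hq).2 hgt
  have hW' (u v) : W u v = u.elim pe (fun _ => q) * if u = some v then pc / q else 1 := by
    rcases u with _ | w
    · simp [hW]
    · rw [hW, Option.elim_some, if_neg (Option.some_ne_none w)]
      split_ifs <;> field_simp
  have hC : 0 < ∏ i, (z i).elim pe fun _ => q :=
    prod_pos fun i _ => by cases z i <;> assumption
  rw [likelihood_eq_mul_fixedPointSum hW' hz hx₁, likelihood_eq_mul_fixedPointSum hW' hz hx₂,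
    gt_iff_lt, gt_iff_lt, mul_lt_mul_iff_right₀ hC, fixedPointSum_lt_iff hr]
  -- the two sides differ only in the `Decidable` instances of the filters
  convert Iff.rfl

/-- **Proposition 1 (ML decoder characterization).**
Channel-1 weight `W u v`: `p_c` if `u = some v`, `p_e` if `u = none`
(erasure), `p_s / (2^l - 1)` otherwise.  The permutation-averaged
likelihood `L(x, z) = ∑_{π ∈ S_n} ∏_i W (z i) (x (π i))` satisfies
`L(x¹, z) > L(x², z)` iff `x¹` shares more rows with the non-erased rows
of `z` than `x²` does. -/
theorem stmt0 (n l : ℕ) (hn : 1 ≤ n) (hl : 1 ≤ l)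
    (pc pe ps : ℝ) (hpc : 0 < pc) (hpe : 0 < pe) (hps : 0 < ps)
    (hsum : pc + pe + ps = 1) (hgt : pc > ps / (2 ^ l - 1))
    (W : Option (Fin l → ZMod 2) → (Fin l → ZMod 2) → ℝ)
    (hW : ∀ u v, W u v =
      if u = some v then pc else if u = none then pe else ps / (2 ^ l - 1))
    (z : Fin n → Option (Fin l → ZMod 2))
    (hz : ∀ i j : Fin n, z i = z j → z i ≠ none → i = j)
    (x₁ x₂ : Fin n → (Fin l → ZMod 2))
    (hx₁ : Function.Injective x₁) (hx₂ : Function.Injective x₂) :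
    ((∑ π : Equiv.Perm (Fin n), ∏ i : Fin n, W (z i) (x₁ (π i))) >
        ∑ π : Equiv.Perm (Fin n), ∏ i : Fin n, W (z i) (x₂ (π i))) ↔
      (Finset.univ.filter fun i : Fin n => ∃ j : Fin n, z j = some (x₁ i)).card >
        (Finset.univ.filter fun i : Fin n => ∃ j : Fin n, z j = some (x₂ i)).card :=
  stmt0_general n l hl pc pe ps hpe hps hgt W hW z hz x₁ x₂ hx₁ hx₂
end

section
/- Let n be a natural number and θ a real number with θ > 1. For 0 ≤ r ≤ n define f(r) = Σ_{π ∈ S_n} θ^{|{i ∈ Fin n : (i : ℕ) < r and π(i) = i}|}, the sum over all permutations π of Fin n of θ raised to the number of fixed points of π among the first r indices. Then f is strictly increasing on {0, 1, …, n}: for all integers r₂ < r₁ ≤ n one has f(r₂) < f(r₁). Consequently, for r₁, r₂ ≤ n, f(r₁) > f(r₂) if and only if r₁ > r₂. -/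
/-!
Raising the cutoff `r` can only enlarge the set of fixed points counted, so since `θ > 1`
every summand is monotone in `r`. The step from `r` to `r + 1 ≤ n` is strict because the
identity permutation gains the new fixed point `r`.
-/

open Finset

namespace Equiv.Perm

variable {n : ℕ}

def fixedPointsBelow (π : Perm (Fin n)) (r : ℕ) : Finset (Fin n) :=
  univ.filter fun i => (i : ℕ) < r ∧ π i = i

theorem fixedPointsBelow_mono (π : Perm (Fin n)) : Monotone π.fixedPointsBelow :=
  fun _ _ hrs _ hi => by
    simp only [fixedPointsBelow, mem_filter] at hi ⊢
    exact ⟨hi.1, hi.2.1.trans_le hrs, hi.2.2⟩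

theorem card_fixedPointsBelow_one {r : ℕ} (hr : r ≤ n) :
    (fixedPointsBelow (1 : Perm (Fin n)) r).card = r := by
  simp [fixedPointsBelow, Fin.card_filter_val_lt, hr]

theorem sum_pow_card_fixedPointsBelow_lt_succ {θ : ℝ} (hθ : 1 < θ) {r : ℕ} (hr : r < n) :
    ∑ π : Perm (Fin n), θ ^ (π.fixedPointsBelow r).card
      < ∑ π : Perm (Fin n), θ ^ (π.fixedPointsBelow (r + 1)).card := by
  refine sum_lt_sum (fun π _ => ?_) ⟨1, mem_univ _, ?_⟩
  · exact pow_le_pow_right₀ hθ.le <| card_le_card <| π.fixedPointsBelow_mono r.le_succ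
  · rw [card_fixedPointsBelow_one hr.le, card_fixedPointsBelow_one hr]
    exact pow_lt_pow_right₀ hθ r.lt_succ_self

theorem strictMonoOn_sum_pow_card_fixedPointsBelow {θ : ℝ} (hθ : 1 < θ) :
    StrictMonoOn (fun r => ∑ π : Perm (Fin n), θ ^ (π.fixedPointsBelow r).card)
      (Set.Iic n) :=
  strictMonoOn_Iic_of_lt_succ fun _ hr => sum_pow_card_fixedPointsBelow_lt_succ hθ hr

end Equiv.Perm

/-- For `θ > 1`, the function
`f(r) = ∑_{π ∈ S_n} θ^{#{i ∈ Fin n : (i : ℕ) < r ∧ π i = i}}`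
is strictly increasing on `{0, 1, …, n}`, and consequently for
`r₁, r₂ ≤ n` one has `f r₁ > f r₂ ↔ r₁ > r₂`. -/
theorem stmt1 (n : ℕ) (θ : ℝ) (hθ : 1 < θ)
    (f : ℕ → ℝ)
    (hf : ∀ r : ℕ, f r = ∑ π : Equiv.Perm (Fin n),
      θ ^ (Finset.univ.filter fun i : Fin n => (i : ℕ) < r ∧ π i = i).card) :
    (∀ r₁ r₂ : ℕ, r₂ < r₁ → r₁ ≤ n → f r₂ < f r₁) ∧
      (∀ r₁ r₂ : ℕ, r₁ ≤ n → r₂ ≤ n → (f r₁ > f r₂ ↔ r₁ > r₂)) := by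
  have hmono : StrictMonoOn f (Set.Iic n) := by
    rw [show f = _ from funext hf]
    exact Equiv.Perm.strictMonoOn_sum_pow_card_fixedPointsBelow hθ
  exact ⟨fun r₁ r₂ h h₁ => hmono (Set.mem_Iic.2 (h.le.trans h₁)) h₁ h,
    fun r₁ r₂ h₁ h₂ => hmono.lt_iff_lt h₂ h₁⟩
end

section
/- Let α be a type, n a natural number, a : Fin n → α an injective function, and z : Fin n → Option α such that any two non-erased entries are distinct (i.e., if z_i = z_j ≠ none then i = j). Let r be the cardinality of {i ∈ Fin n : ∃ j, z_j = some(a_i)} (the number of values of a that appear among the non-erased entries of z). Then there exist permutations σ and τ of Fin n such that, for every permutation π of Fin n, |{i ∈ Fin n : z(τ(i)) = some(a(σ(π(i))))}| = |{i ∈ Fin n : (i : ℕ) < r and π(i) = i}|. (This is the alignment step, Eqns. (19) and (22), in the proof of Proposition 1.) -/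
/-!
The relation `R i j :⇔ z j = some (a i)` is a partial bijection of `Fin n`: injectivity of `a`
makes it left unique, distinctness of the non-erased entries of `z` makes it right unique, and
its domain has `r` elements. Choose `σ` mapping the first `r` indices onto this domain and `τ`
following `σ` by the matching there, while sending the remaining indices outside the range of
`R`. Then `R (σ k) (τ i)` holds exactly when `i < r` and `k = i`.
-/

open Finset Equiv

theorem exists_perm_rel_apply_iff {ι : Type*} [Fintype ι] {R : ι → ι → Prop} [DecidableRel R]
    (hl : Relator.LeftUnique R) (hr : Relator.RightUnique R) (T : Finset ι)
    (hT : #T = #{i | ∃ j, R i j}) :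
    ∃ σ τ : Perm ι, ∀ i j, R (σ i) (τ j) ↔ j ∈ T ∧ i = j := by
  classical
  choose m hm using fun i : ({i | ∃ j, R i j} : Finset ι) => (mem_filter.1 i.2).2
  have hm_inj : Function.Injective m := fun i i' h => Subtype.ext (hl (hm i) (h ▸ hm i'))
  let e : T ≃ ({i | ∃ j, R i j} : Finset ι) := equivOfCardEq hT
  refine ⟨e.extendSubtype, (e.trans (ofInjective m hm_inj)).extendSubtype, fun i j => ?_⟩
  by_cases hj : j ∈ T
  · have hjj : R (e.extendSubtype j) ((e.trans (ofInjective m hm_inj)).extendSubtype j) := by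
      rw [extendSubtype_apply_of_mem _ _ hj, extendSubtype_apply_of_mem _ _ hj]
      exact hm _
    exact ⟨fun h => ⟨hj, e.extendSubtype.injective (hl h hjj)⟩, by rintro ⟨-, rfl⟩; exact hjj⟩
  · have hτj := extendSubtype_not_mem (e.trans (ofInjective m hm_inj)) _ hj
    simp only [hj, false_and, iff_false]
    exact fun h => hτj ⟨⟨_, mem_filter.2 ⟨mem_univ _, _, h⟩⟩, hr (hm _) h⟩

/-- **Alignment step (Eqns. (19) and (22) in the proof of Proposition 1).**
If `a : Fin n → α` is injective and the non-erased entries of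
`z : Fin n → Option α` are pairwise distinct, and `r` is the number of
values of `a` appearing among the non-erased entries of `z`, then there
are permutations `σ, τ` of `Fin n` such that for every permutation `π`,
the number of indices `i` with `z (τ i) = some (a (σ (π i)))` equals the
number of fixed points of `π` among the first `r` indices. -/
theorem stmt2 {α : Type*} [DecidableEq α] (n : ℕ)
    (a : Fin n → α) (ha : Function.Injective a)
    (z : Fin n → Option α)
    (hz : ∀ i j : Fin n, z i = z j → z i ≠ none → i = j)
    (r : ℕ)
    (hr : r = (Finset.univ.filter fun i : Fin n => ∃ j : Fin n, z j = some (a i)).card) :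
    ∃ σ τ : Equiv.Perm (Fin n), ∀ π : Equiv.Perm (Fin n),
      (Finset.univ.filter fun i : Fin n => z (τ i) = some (a (σ (π i)))).card =
        (Finset.univ.filter fun i : Fin n => (i : ℕ) < r ∧ π i = i).card := by
  have hrn : r ≤ n := hr ▸ (card_le_univ _).trans_eq (Fintype.card_fin n)
  obtain ⟨σ, τ, h⟩ := exists_perm_rel_apply_iff (R := fun i j => z j = some (a i))
    (fun _ _ _ hi hi' => ha (Option.some_injective _ (hi.symm.trans hi')))
    (fun _ _ _ hj hj' => hz _ _ (hj.trans hj'.symm) (by simp [hj]))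
    {i : Fin n | i < r} (by rw [Fin.card_filter_val_lt, min_eq_right hrn, hr]; convert rfl)
  refine ⟨σ, τ, fun π => congrArg card (filter_congr fun i _ => ?_)⟩
  simpa using h (π i) i
end

section
/- Under the outer-channel parameter definitions, let n ≥ 2 and let t, t₀ be integers with 1 ≤ t₀ < t ≤ n − 1. For integers 0 ≤ t₀' ≤ t' ≤ n − 1 define M(t', t₀') = ((n−1)! / (t₀'! · (t' − t₀')! · (n − 1 − t')!)) · (q/2)^{t'} · (1 − q)^{n−1−t'}. Set A = M(t−1, t₀−1)(p₁+p₄) + M(t, t₀)(p₂+p₃) + M(t−1, t₀)p₅ and B = M(t−1, t₀)(p₁+p₄) + M(t, t₀)(p₂+p₃) + M(t−1, t₀−1)p₅. Then A·Den = B·Num, i.e., the likelihood ratio A/B from Eqn. (34) equals the closed-form soft information Num/Den of Eqn. (11). (This is the concluding identity in the proof of Proposition 2.) -/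
/-!
`M(t', t₀')` is the trinomial weight of splitting the other `n − 1` rows into `t₀'`, `t' − t₀'`,
`n − 1 − t'` rows with cell probabilities `x = y = q/2`, `z = 1 − q`. Writing `t₀ = i + 1`,
`t = i + j + 2`, `n − 1 = i + j + k + 2`, the three weights in `A` and `B` sit at the neighbours
`(i, j+1, k+1)`, `(i+1, j, k+1)`, `(i+1, j+1, k)` of the lattice point `(i+1, j+1, k+1)`, so they
are one common factor times `(i+1)yz`, `(j+1)xz`, `(k+1)xy`. Factoring it out makes `A` and `B`
the same multiple of `Num` and `Den`.
-/

open Nat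

section Trinomial

variable (x y z : ℝ)

noncomputable def trinomialTerm (i j k : ℕ) : ℝ :=
  ((i + j + k)! : ℝ) / (i ! * j ! * k !) * x ^ i * y ^ j * z ^ k

noncomputable def trinomialCofactor (i j k : ℕ) : ℝ :=
  ((i + j + k + 2)! : ℝ) / ((i + 1)! * (j + 1)! * (k + 1)!) * x ^ i * y ^ j * z ^ k

theorem trinomialTerm_succ_succ_self (i j k : ℕ) :
    trinomialTerm x y z (i + 1) (j + 1) k = trinomialCofactor x y z i j k * ((k + 1) * x * y) := by
  rw [trinomialTerm, trinomialCofactor, show i + 1 + (j + 1) + k = i + j + k + 2 by omega]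
  simp only [factorial_succ k, pow_succ]
  push_cast
  field_simp

theorem trinomialTerm_self_succ_succ (i j k : ℕ) :
    trinomialTerm x y z i (j + 1) (k + 1) = trinomialCofactor x y z i j k * ((i + 1) * y * z) := by
  rw [trinomialTerm, trinomialCofactor, show i + (j + 1) + (k + 1) = i + j + k + 2 by omega]
  simp only [factorial_succ i, pow_succ]
  push_cast
  field_simp

theorem trinomialTerm_succ_self_succ (i j k : ℕ) :
    trinomialTerm x y z (i + 1) j (k + 1) = trinomialCofactor x y z i j k * ((j + 1) * x * z) := by
  rw [trinomialTerm, trinomialCofactor, show i + 1 + j + (k + 1) = i + j + k + 2 by omega]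
  simp only [factorial_succ j, pow_succ]
  push_cast
  field_simp

end Trinomial

theorem factorial_div_mul_pow_eq_trinomialTerm (q : ℝ) {N t' t₀' : ℕ} (h₀ : t₀' ≤ t')
    (h : t' ≤ N) :
    (N ! : ℝ) / (t₀' ! * (t' - t₀')! * (N - t')!) * (q / 2) ^ t' * (1 - q) ^ (N - t') =
      trinomialTerm (q / 2) (q / 2) (1 - q) t₀' (t' - t₀') (N - t') := by
  rw [trinomialTerm, show t₀' + (t' - t₀') + (N - t') = N by omega, mul_assoc _ (_ ^ t₀'),
    ← pow_add, show t₀' + (t' - t₀') = t' by omega]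

theorem stmt6_general (n : ℕ)
    (q p₁ p₂ p₃ p₄ p₅ : ℝ)
    (t t₀ : ℕ) (ht₀ : 1 ≤ t₀) (ht₀t : t₀ < t) (ht : t ≤ n - 1)
    (M : ℕ → ℕ → ℝ)
    (hM : ∀ t' t₀' : ℕ, t₀' ≤ t' → t' ≤ n - 1 →
      M t' t₀' = ((n - 1).factorial : ℝ) /
          ((t₀'.factorial : ℝ) * ((t' - t₀').factorial : ℝ) * ((n - 1 - t').factorial : ℝ)) *
        (q / 2) ^ t' * (1 - q) ^ (n - 1 - t'))
    (Num Den A B : ℝ)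
    (hNum : Num = 2 * (t₀ : ℝ) * (1 - q) * (p₁ + p₄) +
      ((n : ℝ) - (t : ℝ)) * q * (p₂ + p₃) + 2 * ((t : ℝ) - (t₀ : ℝ)) * (1 - q) * p₅)
    (hDen : Den = 2 * ((t : ℝ) - (t₀ : ℝ)) * (1 - q) * (p₁ + p₄) +
      ((n : ℝ) - (t : ℝ)) * q * (p₂ + p₃) + 2 * (t₀ : ℝ) * (1 - q) * p₅)
    (hA : A = M (t - 1) (t₀ - 1) * (p₁ + p₄) + M t t₀ * (p₂ + p₃) + M (t - 1) t₀ * p₅)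
    (hB : B = M (t - 1) t₀ * (p₁ + p₄) + M t t₀ * (p₂ + p₃) + M (t - 1) (t₀ - 1) * p₅) :
    A * Den = B * Num := by
  obtain ⟨i, rfl⟩ : ∃ i, t₀ = i + 1 := ⟨t₀ - 1, by omega⟩
  obtain ⟨j, rfl⟩ : ∃ j, t = i + 1 + j + 1 := ⟨t - (i + 1) - 1, by omega⟩
  obtain ⟨k, rfl⟩ : ∃ k, n = i + j + k + 3 := ⟨n - (i + j + 2) - 1, by omega⟩
  have hMw : ∀ t' t₀', t₀' ≤ t' → t' ≤ i + j + k + 3 - 1 →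
      M t' t₀' = trinomialTerm (q / 2) (q / 2) (1 - q) t₀' (t' - t₀') (i + j + k + 3 - 1 - t') :=
    fun t' t₀' h₀ h => (hM t' t₀' h₀ h).trans (factorial_div_mul_pow_eq_trinomialTerm q h₀ h)
  have hMt : M (i + 1 + j + 1) (i + 1) =
      trinomialTerm (q / 2) (q / 2) (1 - q) (i + 1) (j + 1) k := by
    rw [hMw _ _ (by omega) (by omega)]; congr 1 <;> omega
  have hMt₀ : M (i + 1 + j) (i + 1) =
      trinomialTerm (q / 2) (q / 2) (1 - q) (i + 1) j (k + 1) := by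
    rw [hMw _ _ (by omega) (by omega)]; congr 1 <;> omega
  have hMt₀' : M (i + 1 + j) i =
      trinomialTerm (q / 2) (q / 2) (1 - q) i (j + 1) (k + 1) := by
    rw [hMw _ _ (by omega) (by omega)]; congr 1 <;> omega
  simp only [Nat.add_sub_cancel] at hA hB
  rw [hA, hB, hMt, hMt₀, hMt₀', trinomialTerm_succ_succ_self, trinomialTerm_self_succ_succ,
    trinomialTerm_succ_self_succ, hNum, hDen]
  push_cast
  ring

/-- **Concluding identity of the proof of Proposition 2.**  With
`M(t', t₀') = ((n−1)!/(t₀'! (t'−t₀')! (n−1−t')!)) (q/2)^{t'} (1−q)^{n−1−t'}`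
and `A, B` the numerator and denominator of the likelihood ratio of
Eqn. (34), one has `A·Den = B·Num`, i.e. `A/B` equals the closed-form
soft information `Num/Den` of Eqn. (11). -/
theorem stmt6 (l a n : ℕ) (ha : 1 ≤ a) (hla : a < l) (hn : 2 ≤ n)
    (pc pe ps : ℝ) (hpc : 0 ≤ pc) (hpe : 0 ≤ pe) (hps : 0 ≤ ps)
    (hsum : pc + pe + ps = 1)
    (q p₁ p₂ p₃ p₄ p₅ : ℝ)
    (hq : q = ps * 2 ^ (l - a) / (2 ^ l - 1))
    (hp₁ : p₁ = pc) (hp₂ : p₂ = pe)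
    (hp₃ : p₃ = ps * ((2 : ℝ) ^ l - 2 ^ (l - a)) / (2 ^ l - 1))
    (hp₄ : p₄ = ps * ((2 : ℝ) ^ (l - a - 1) - 1) / (2 ^ l - 1))
    (hp₅ : p₅ = ps * 2 ^ (l - a - 1) / (2 ^ l - 1))
    (t t₀ : ℕ) (ht₀ : 1 ≤ t₀) (ht₀t : t₀ < t) (ht : t ≤ n - 1)
    (M : ℕ → ℕ → ℝ)
    (hM : ∀ t' t₀' : ℕ, t₀' ≤ t' → t' ≤ n - 1 →
      M t' t₀' = ((n - 1).factorial : ℝ) /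
          ((t₀'.factorial : ℝ) * ((t' - t₀').factorial : ℝ) * ((n - 1 - t').factorial : ℝ)) *
        (q / 2) ^ t' * (1 - q) ^ (n - 1 - t'))
    (Num Den A B : ℝ)
    (hNum : Num = 2 * (t₀ : ℝ) * (1 - q) * (p₁ + p₄) +
      ((n : ℝ) - (t : ℝ)) * q * (p₂ + p₃) + 2 * ((t : ℝ) - (t₀ : ℝ)) * (1 - q) * p₅)
    (hDen : Den = 2 * ((t : ℝ) - (t₀ : ℝ)) * (1 - q) * (p₁ + p₄) +
      ((n : ℝ) - (t : ℝ)) * q * (p₂ + p₃) + 2 * (t₀ : ℝ) * (1 - q) * p₅)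
    (hA : A = M (t - 1) (t₀ - 1) * (p₁ + p₄) + M t t₀ * (p₂ + p₃) + M (t - 1) t₀ * p₅)
    (hB : B = M (t - 1) t₀ * (p₁ + p₄) + M t t₀ * (p₂ + p₃) + M (t - 1) (t₀ - 1) * p₅) :
    A * Den = B * Num :=
  stmt6_general n q p₁ p₂ p₃ p₄ p₅ t t₀ ht₀ ht₀t ht M hM Num Den A B hNum hDen hA hB
end

section
/- Let l ≥ 1 be an integer and p_c, p_s real numbers. For any two distinct strings x₁ ≠ x₂ in 𝔽₂^l, Σ_{e ∈ 𝔽₂^l} W(some e | x₁)·W(some e | x₂) = 2·p_c·p_s/(2^l − 1) + (2^l − 2)·p_s²/(2^l − 1)². (This computes the probability p_{ij} that two distinct transmitted rows yield two identical non-empty rows under channel-1.) -/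
/-- The probability that two distinct transmitted rows yield the same
non-empty received row under channel-1:
`∑_{e ∈ 𝔽₂^l} W(some e | x₁) · W(some e | x₂)
  = 2 p_c p_s/(2^l − 1) + (2^l − 2) p_s²/(2^l − 1)²` for `x₁ ≠ x₂`. -/
theorem stmt9 (l : ℕ) (hl : 1 ≤ l) (pc pe ps : ℝ)
    (W : Option (Fin l → ZMod 2) → (Fin l → ZMod 2) → ℝ)
    (hW : ∀ u v, W u v =
      if u = some v then pc else if u = none then pe else ps / (2 ^ l - 1))
    (x₁ x₂ : Fin l → ZMod 2) (hx : x₁ ≠ x₂) :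
    (∑ e : Fin l → ZMod 2, W (some e) x₁ * W (some e) x₂) =
      2 * pc * ps / (2 ^ l - 1) +
        ((2 : ℝ) ^ l - 2) * ps ^ 2 / ((2 : ℝ) ^ l - 1) ^ 2 := by
  set c : ℝ := ps / (2 ^ l - 1) with hc
  have hterm : ∀ e : Fin l → ZMod 2, W (some e) x₁ * W (some e) x₂ =
      c * c + (if e = x₁ then pc * c - c * c else 0)
            + (if e = x₂ then c * pc - c * c else 0) := by
    intro e
    rw [hW, hW]
    by_cases h1 : e = x₁ <;> by_cases h2 : e = x₂ <;>
      simp_all [Option.some_inj] <;> ring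
  rw [Finset.sum_congr rfl fun e _ => hterm e]
  rw [Finset.sum_add_distrib, Finset.sum_add_distrib, Finset.sum_const,
    Finset.sum_ite_eq' Finset.univ x₁, Finset.sum_ite_eq' Finset.univ x₂]
  have hcard : (Finset.univ : Finset (Fin l → ZMod 2)).card = 2 ^ l := by
    simp [Finset.card_univ]
  have hne : (2 : ℝ) ^ l - 1 ≠ 0 := by
    have : (2 : ℝ) ≤ 2 ^ l := by
      calc (2:ℝ) = 2 ^ 1 := by norm_num
      _ ≤ 2 ^ l := by exact pow_le_pow_right₀ (by norm_num) hl
    linarith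
  simp only [Finset.mem_univ, if_true, hcard, nsmul_eq_mul]
  push_cast
  rw [hc]
  field_simp
  ring
end

section
/- Let n ≥ 1 and l ≥ 1 be integers, let p_c, p_e, p_s be nonnegative reals with p_c + p_e + p_s = 1, and let x : Fin n → 𝔽₂^l be injective. Consider the product probability measure ⨂_{i ∈ Fin n} μ_{x(i)} on (Option 𝔽₂^l)^{Fin n}, where each coordinate is an independent channel-1 output. Then the probability of the event {y : ∃ i ≠ j, y_i ≠ none and y_i = y_j} (the received matrix has at least two identical non-empty rows) is at most (n²/2^l)·(2·p_c·p_s + p_s²). -/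
open MeasureTheory
open ENNReal

/-- The space of outputs of channel-1: a length-`l` binary string or an
erasure, endowed with the discrete (⊤) measurable structure. -/
def OuterChannelOutput (l : ℕ) : Type := Option (Fin l → ZMod 2)

instance (l : ℕ) : MeasurableSpace (OuterChannelOutput l) := ⊤

lemma pair_pi {n l : ℕ} (μ' : Fin n → Measure (OuterChannelOutput l))
    [∀ i, IsProbabilityMeasure (μ' i)] (i j : Fin n) (hij : i ≠ j)
    (a : OuterChannelOutput l) :
    Measure.pi μ' {y | y i = a ∧ y j = a} = μ' i {a} * μ' j {a} := by
  classical
  set F : Fin n → Set (OuterChannelOutput l) :=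
    fun k => if k = i then {a} else if k = j then {a} else Set.univ with hF
  have hset : {y : Fin n → OuterChannelOutput l | y i = a ∧ y j = a} = Set.pi Set.univ F := by
    ext y
    simp only [Set.mem_setOf_eq, Set.mem_pi, Set.mem_univ, forall_true_left, hF]
    constructor
    · rintro ⟨h1, h2⟩ k
      by_cases hk : k = i
      · subst hk; simp [h1]
      · by_cases hk2 : k = j
        · subst hk2; simp [hk, h2]
        · simp [hk, hk2]
    · intro h
      have h1 := h i; have h2 := h j
      simp [hij.symm] at h1 h2
      exact ⟨h1, h2⟩
  rw [hset, Measure.pi_pi]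
  have f := fun k => μ' k (F k)
  rw [← Finset.mul_prod_erase Finset.univ _ (Finset.mem_univ i)]
  rw [← Finset.mul_prod_erase _ _ (Finset.mem_erase.2 ⟨hij.symm, Finset.mem_univ j⟩)]
  have hrest : ∏ k ∈ (Finset.univ.erase i).erase j, μ' k (F k) = 1 := by
    apply Finset.prod_eq_one
    intro k hk
    simp only [Finset.mem_erase] at hk
    simp [hF, hk.1, hk.2.1, measure_univ]
  rw [hrest]
  simp [hF, hij.symm]

-- per-pair sum lemma
lemma pair_bound {n l : ℕ} (hl : 1 ≤ l) (pc ps : ℝ)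
    (x : Fin n → Fin l → ZMod 2) (hx : Function.Injective x)
    (μ : (Fin l → ZMod 2) → Measure (OuterChannelOutput l))
    (hprob : ∀ v, IsProbabilityMeasure (μ v))
    (hμc : ∀ v, μ v {(some v : OuterChannelOutput l)} = ENNReal.ofReal pc)
    (hμs : ∀ v e, e ≠ v →
      μ v {(some e : OuterChannelOutput l)} = ENNReal.ofReal (ps / ((2 : ℝ) ^ l - 1)))
    (i j : Fin n) (hij : i ≠ j) :
    Measure.pi (fun i : Fin n => μ (x i))
      {y : Fin n → OuterChannelOutput l | y i ≠ none ∧ y i = y j} ≤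
    ENNReal.ofReal pc * ENNReal.ofReal (ps / ((2:ℝ)^l - 1))
      + ENNReal.ofReal (ps / ((2:ℝ)^l - 1)) * ENNReal.ofReal pc
      + (2^l - 2 : ℕ) *
        (ENNReal.ofReal (ps / ((2:ℝ)^l - 1)) * ENNReal.ofReal (ps / ((2:ℝ)^l - 1))) := by
  classical
  haveI : ∀ k : Fin n, IsProbabilityMeasure (μ (x k)) := fun k => hprob _
  set q : ENNReal := ENNReal.ofReal (ps / ((2:ℝ)^l - 1)) with hq
  have hsub : {y : Fin n → OuterChannelOutput l | y i ≠ none ∧ y i = y j} ⊆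
      ⋃ e : Fin l → ZMod 2, {y | y i = (some e : OuterChannelOutput l) ∧ y j = some e} := by
    rintro y ⟨h1, h2⟩
    match hy : y i with
    | none => exact absurd hy h1
    | some e => exact Set.mem_iUnion.2 ⟨e, hy, h2 ▸ hy⟩
  refine le_trans (measure_mono hsub) ?_
  refine le_trans (measure_iUnion_le _) ?_
  rw [tsum_fintype]
  have hgval : ∀ e : Fin l → ZMod 2,
      Measure.pi (fun i : Fin n => μ (x i))
        {y : Fin n → OuterChannelOutput l | y i = (some e : OuterChannelOutput l) ∧ y j = some e}
      = μ (x i) {(some e : OuterChannelOutput l)} * μ (x j) {(some e : OuterChannelOutput l)} :=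
    fun e => pair_pi _ i j hij (some e)
  calc ∑ e : Fin l → ZMod 2, Measure.pi (fun i : Fin n => μ (x i))
        {y : Fin n → OuterChannelOutput l | y i = (some e : OuterChannelOutput l) ∧ y j = some e}
      = ∑ e : Fin l → ZMod 2,
          μ (x i) {(some e : OuterChannelOutput l)} * μ (x j) {(some e : OuterChannelOutput l)} :=
        Finset.sum_congr rfl fun e _ => hgval e
    _ = ENNReal.ofReal pc * q + q * ENNReal.ofReal pc + (2^l - 2 : ℕ) * (q * q) := ?_
    _ ≤ _ := le_rfl
  set g : (Fin l → ZMod 2) → ENNReal :=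
    fun e => μ (x i) {(some e : OuterChannelOutput l)} * μ (x j) {(some e : OuterChannelOutput l)}
    with hg
  have hne : x i ≠ x j := fun h => hij (hx h)
  have hmemj : x j ∈ Finset.univ.erase (x i) :=
    Finset.mem_erase.2 ⟨hne.symm, Finset.mem_univ _⟩
  rw [← Finset.add_sum_erase Finset.univ g (Finset.mem_univ (x i)),
      ← Finset.add_sum_erase _ g hmemj]
  have hgi : g (x i) = ENNReal.ofReal pc * q := by
    rw [hg]; simp only []
    rw [hμc (x i), hμs (x j) (x i) hne, hq]
  have hgj : g (x j) = q * ENNReal.ofReal pc := by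
    rw [hg]; simp only []
    rw [hμc (x j), hμs (x i) (x j) hne.symm, hq]
  have hterm : ∀ e ∈ (Finset.univ.erase (x i)).erase (x j), g e = q * q := by
    intro e he
    simp only [Finset.mem_erase] at he
    rw [hg]; simp only []
    rw [hμs (x i) e he.2.1, hμs (x j) e he.1, hq]
  have hrest : ∑ e ∈ (Finset.univ.erase (x i)).erase (x j), g e = (2^l - 2 : ℕ) * (q * q) := by
    rw [Finset.sum_congr rfl hterm, Finset.sum_const, nsmul_eq_mul]
    congr 1
    rw [Finset.card_erase_of_mem hmemj, Finset.card_erase_of_mem (Finset.mem_univ _),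
        Finset.card_univ]
    simp only [Fintype.card_fun, Fintype.card_fin, ZMod.card]
    congr 1

  rw [hgi, hgj, hrest, add_assoc]

/-- The probability that the received matrix contains at least two
identical non-empty rows is at most `(n²/2^l)(2 p_c p_s + p_s²)`, where
the `n` rows are independent channel-1 outputs (product measure) for the
pairwise-distinct transmitted rows `x i`. -/
theorem stmt11 (n l : ℕ) (hn : 1 ≤ n) (hl : 1 ≤ l)
    (pc pe ps : ℝ) (hpc : 0 ≤ pc) (hpe : 0 ≤ pe) (hps : 0 ≤ ps)
    (hsum : pc + pe + ps = 1)
    (x : Fin n → Fin l → ZMod 2) (hx : Function.Injective x)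
    (μ : (Fin l → ZMod 2) → Measure (OuterChannelOutput l))
    (hprob : ∀ v, IsProbabilityMeasure (μ v))
    (hμc : ∀ v, μ v {(some v : OuterChannelOutput l)} = ENNReal.ofReal pc)
    (hμe : ∀ v, μ v {(none : OuterChannelOutput l)} = ENNReal.ofReal pe)
    (hμs : ∀ v e, e ≠ v →
      μ v {(some e : OuterChannelOutput l)} = ENNReal.ofReal (ps / ((2 : ℝ) ^ l - 1))) :
    Measure.pi (fun i : Fin n => μ (x i))
        {y : Fin n → OuterChannelOutput l |
          ∃ i j : Fin n, i ≠ j ∧ y i ≠ (none : OuterChannelOutput l) ∧ y i = y j} ≤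
      ENNReal.ofReal (((n : ℝ) ^ 2 / (2 : ℝ) ^ l) * (2 * pc * ps + ps ^ 2)) := by
  classical
  haveI : ∀ k : Fin n, IsProbabilityMeasure (μ (x k)) := fun k => hprob _
  obtain ⟨m, hm⟩ : ∃ m : ℝ, m = (2:ℝ)^l := ⟨_, rfl⟩
  rw [show ((2:ℝ)^l) = m from hm.symm]
  have hm2 : (2:ℝ) ≤ m := by
    rw [hm]
    calc (2:ℝ) = 2^1 := (pow_one 2).symm
    _ ≤ (2:ℝ)^l := pow_le_pow_right₀ one_le_two hl
  have hm1 : (0:ℝ) < m - 1 := by linarith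
  have hm0 : (0:ℝ) < m := by linarith
  obtain ⟨qr, hqr⟩ : ∃ q : ℝ, q = ps / (m - 1) := ⟨_, rfl⟩
  have hqr0 : 0 ≤ qr := hqr ▸ div_nonneg hps hm1.le
  have hqps : qr * (m - 1) = ps := by rw [hqr]; exact div_mul_cancel₀ _ hm1.ne'
  obtain ⟨C, hC⟩ : ∃ C : ℝ, C = pc * qr + qr * pc + (m - 2) * (qr * qr) := ⟨_, rfl⟩
  have hm2' : (0:ℝ) ≤ m - 2 := by linarith
  have hC0 : 0 ≤ C := by
    have h1 := mul_nonneg hpc hqr0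
    have h2 : 0 ≤ (m - 2) * (qr * qr) := mul_nonneg hm2' (mul_nonneg hqr0 hqr0)
    rw [hC]; linarith
  have hnat2 : (2:ℕ) ≤ 2 ^ l := by
    calc (2:ℕ) = 2^1 := (pow_one 2).symm
    _ ≤ 2^l := Nat.pow_le_pow_right (by norm_num) hl
  have hq' : ps / ((2:ℝ)^l - 1) = qr := by rw [hqr, hm]
  -- per-pair bound in ofReal form
  have hpair : ∀ i j : Fin n, i ≠ j →
      Measure.pi (fun i : Fin n => μ (x i))
        {y : Fin n → OuterChannelOutput l | y i ≠ none ∧ y i = y j} ≤ ENNReal.ofReal C := by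
    intro i j hij
    refine le_trans (pair_bound hl pc ps x hx μ hprob hμc hμs i j hij) (le_of_eq ?_)
    have hcast : ((2 ^ l - 2 : ℕ) : ℝ≥0∞) = ENNReal.ofReal (m - 2) := by
      rw [← ENNReal.ofReal_natCast]
      congr 1
      rw [Nat.cast_sub hnat2, hm]
      push_cast
      ring
    rw [hq', hcast, hC,
        ENNReal.ofReal_add (by positivity) (mul_nonneg hm2' (mul_nonneg hqr0 hqr0)),
        ENNReal.ofReal_add (mul_nonneg hpc hqr0) (mul_nonneg hqr0 hpc),
        ENNReal.ofReal_mul hpc, ENNReal.ofReal_mul hqr0, ENNReal.ofReal_mul hm2',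
        ENNReal.ofReal_mul hqr0]
  -- covering
  set S : Fin n → Fin n → Set (Fin n → OuterChannelOutput l) :=
    fun i j => {y | y i ≠ none ∧ y i = y j} with hS
  have hcover : {y : Fin n → OuterChannelOutput l |
      ∃ i j : Fin n, i ≠ j ∧ y i ≠ (none : OuterChannelOutput l) ∧ y i = y j} ⊆
      ⋃ j : Fin n, ⋃ i ∈ Finset.Iio j, S i j := by
    rintro y ⟨i, j, hij, h1, h2⟩
    rcases lt_or_gt_of_ne hij with h | h
    · exact Set.mem_iUnion.2 ⟨j, Set.mem_iUnion₂.2 ⟨i, Finset.mem_Iio.2 h, h1, h2⟩⟩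
    · refine Set.mem_iUnion.2 ⟨i, Set.mem_iUnion₂.2 ⟨j, Finset.mem_Iio.2 h, ?_, h2.symm⟩⟩
      rw [← h2]; exact h1
  obtain ⟨K, hK⟩ : ∃ K : ℕ, K = ∑ j : Fin n, (j : ℕ) := ⟨_, rfl⟩
  calc Measure.pi (fun i : Fin n => μ (x i))
        {y : Fin n → OuterChannelOutput l |
          ∃ i j : Fin n, i ≠ j ∧ y i ≠ (none : OuterChannelOutput l) ∧ y i = y j}
      ≤ Measure.pi (fun i : Fin n => μ (x i)) (⋃ j : Fin n, ⋃ i ∈ Finset.Iio j, S i j) :=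
        measure_mono hcover
    _ ≤ ∑' j : Fin n, Measure.pi (fun i : Fin n => μ (x i)) (⋃ i ∈ Finset.Iio j, S i j) :=
        measure_iUnion_le _
    _ = ∑ j : Fin n, Measure.pi (fun i : Fin n => μ (x i)) (⋃ i ∈ Finset.Iio j, S i j) :=
        tsum_fintype _
    _ ≤ ∑ j : Fin n, ∑ i ∈ Finset.Iio j, Measure.pi (fun i : Fin n => μ (x i)) (S i j) :=
        Finset.sum_le_sum fun j _ => measure_biUnion_finset_le _ _
    _ ≤ ∑ j : Fin n, ∑ i ∈ Finset.Iio j, ENNReal.ofReal C := by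
        refine Finset.sum_le_sum fun j _ => Finset.sum_le_sum fun i hi => ?_
        exact hpair i j (ne_of_lt (Finset.mem_Iio.1 hi))
    _ = ∑ j : Fin n, ((j : ℕ) : ℝ≥0∞) * ENNReal.ofReal C := by
        refine Finset.sum_congr rfl fun j _ => ?_
        rw [Finset.sum_const, Fin.card_Iio, nsmul_eq_mul]
    _ = (K : ℝ≥0∞) * ENNReal.ofReal C := by
        rw [← Finset.sum_mul, hK]
        push_cast
        ring
    _ = ENNReal.ofReal ((K : ℝ) * C) := by
        rw [ENNReal.ofReal_mul (Nat.cast_nonneg _), ENNReal.ofReal_natCast]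
    _ ≤ ENNReal.ofReal (((n : ℝ) ^ 2 / m) * (2 * pc * ps + ps ^ 2)) := by
        apply ENNReal.ofReal_le_ofReal
        have hKn : (K : ℝ) * 2 ≤ (n : ℝ)^2 := by
          have h1 : K * 2 = n * (n - 1) := by
            rw [hK, Fin.sum_univ_eq_sum_range (fun i => i) n]
            exact Finset.sum_range_id_mul_two n
          have h2 : K * 2 ≤ n * n := by
            rw [h1]; exact Nat.mul_le_mul_left n (Nat.sub_le n 1)
          have h3 := (Nat.cast_le (α := ℝ)).2 h2
          push_cast at h3 ⊢
          nlinarith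
        have hD : 0 ≤ 2 * pc * ps + ps ^ 2 := by positivity
        have key : C ≤ 2 / m * (2 * pc * ps + ps ^ 2) := by
          rw [hC, ← hqps, div_mul_eq_mul_div, le_div_iff₀ hm0]
          nlinarith [mul_nonneg (mul_nonneg hpc hqr0) hm2',
            mul_nonneg (mul_nonneg hqr0 hqr0) (sq_nonneg (m - 1)),
            mul_nonneg hqr0 hqr0, sq_nonneg (m - 1)]
        calc (K : ℝ) * C ≤ (K : ℝ) * (2 / m * (2 * pc * ps + ps ^ 2)) :=
              mul_le_mul_of_nonneg_left key (Nat.cast_nonneg _)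
          _ = ((K : ℝ) * 2) * ((2 * pc * ps + ps ^ 2) / m) := by ring
          _ ≤ (n : ℝ)^2 * ((2 * pc * ps + ps ^ 2) / m) :=
              mul_le_mul_of_nonneg_right hKn (by positivity)
          _ = (n : ℝ) ^ 2 / m * (2 * pc * ps + ps ^ 2) := by ring
end
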